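/- Reduction of quantum dot boundary conditions to MIT bag boundary conditions (matrix identity behind the Proposition in Section 4): Let θ ∈ [0,2π) with cos θ ≠ 0, let ν ∈ ℝ³ be a unit vector, and set M_θ := diag( √(|cos θ|/(1+sin θ))·I₂ , √(|cos θ|/(1−sin θ))·I₂ ) (a positive self-adjoint invertible 4×4 matrix). Then for every v ∈ ℂ⁴: v = [ (cos θ)·i(α·ν)β + (sin θ)·β ] v holds if and only if M_θ v = ε·i(α·ν)β·(M_θ v), where ε = +1 if cos θ > 0 and ε = −1 if cos θ < 0. Consequently, for θ ∈ [0,π/2)∪(3π/2,2π) the quantum dot Dirac operator satisfies D_ω^θ = M_θ D_ω M_θ, and for θ ∈ (π/2,3π/2) it satisfies D_ω^θ = M_θ D_ω^− M_θ. -/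

import Mathlib

open MeasureTheory Real Set

noncomputable section

/-- The Dirac matrix `α₁`. -/
def alpha1 : Matrix (Fin 4) (Fin 4) ℂ := !![0,0,0,1; 0,0,1,0; 0,1,0,0; 1,0,0,0]

/-- The Dirac matrix `α₂`. -/
def alpha2 : Matrix (Fin 4) (Fin 4) ℂ :=
  !![0,0,0,-Complex.I; 0,0,Complex.I,0; 0,-Complex.I,0,0; Complex.I,0,0,0]

/-- The Dirac matrix `α₃`. -/
def alpha3 : Matrix (Fin 4) (Fin 4) ℂ := !![0,0,1,0; 0,0,0,-1; 1,0,0,0; 0,-1,0,0]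

/-- The Dirac matrix `β`. -/
def betaM : Matrix (Fin 4) (Fin 4) ℂ := !![1,0,0,0; 0,1,0,0; 0,0,-1,0; 0,0,0,-1]

/-- `α · b` for a real vector `b`. -/
def alphaDot (b : Fin 3 → ℝ) : Matrix (Fin 4) (Fin 4) ℂ :=
  (b 0 : ℂ) • alpha1 + (b 1 : ℂ) • alpha2 + (b 2 : ℂ) • alpha3

/-- The matrix `M_θ = diag(√(|cos θ|/(1+sin θ)) I₂, √(|cos θ|/(1−sin θ)) I₂)`. -/
def Mtheta (θ : ℝ) : Matrix (Fin 4) (Fin 4) ℂ :=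
  Matrix.diagonal (fun i => if (i : ℕ) < 2
    then ((Real.sqrt (|Real.cos θ| / (1 + Real.sin θ)) : ℝ) : ℂ)
    else ((Real.sqrt (|Real.cos θ| / (1 - Real.sin θ)) : ℝ) : ℂ))

/-!
Let `P` project onto the upper two spinor components and `Q = 1 - P`. Then `β = P - Q`,
`M_θ = a P + b Q`, and `H = i(α·ν)β` exchanges the two components: `H P = Q H`. With `c = cos θ`,
`s = sin θ` and `e` the sign of `c`, the relations `|c| a = (1 - s) b` and `|c| b = (1 + s) a`
(each equivalent, after squaring, to `c² = (1 + s)(1 - s)`) give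
`(1 - e H) M_θ = (a/(1 - s) P + b/(1 + s) Q) (1 - c H - s β)`,
and the left factor is invertible, so `M_θ` maps the fixed vectors of `c H + s β`
onto those of `e H`.
-/

section IdempotentGrading

variable {k A : Type*} [Ring A] {P H : A}

theorem mul_sub_one_sub_mul_of_mul_eq (hP : IsIdempotentElem P) (hH : H * P = (1 - P) * H) :
    H * (P - (1 - P)) * P = (1 - P) * (H * (P - (1 - P))) :=
  calc H * (P - (1 - P)) * P = H * P := by
        rw [mul_assoc, sub_mul, hP.eq, hP.one_sub_mul_self, sub_zero]
    _ = H * P * (P - (1 - P)) := by rw [mul_assoc, mul_sub, hP.eq, hP.mul_one_sub_self, sub_zero]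
    _ = (1 - P) * (H * (P - (1 - P))) := by rw [hH, mul_assoc]

theorem isUnit_smul_add_smul_one_sub {F : Type*} [Field F] [Algebra F A]
    (hP : IsIdempotentElem P) {r r' : F} (hr : r ≠ 0) (hr' : r' ≠ 0) :
    IsUnit (r • P + r' • (1 - P)) := by
  have hPQ := hP.mul_one_sub_self
  have hQP := hP.one_sub_mul_self
  have hQQ := hP.one_sub.eq
  refine ⟨⟨_, r⁻¹ • P + r'⁻¹ • (1 - P), ?_, ?_⟩, rfl⟩ <;>
  · simp only [mul_add, add_mul, smul_mul_smul, hP.eq, hPQ, hQP, hQQ, smul_zero, add_zero,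
      zero_add, mul_inv_cancel₀ hr, mul_inv_cancel₀ hr', inv_mul_cancel₀ hr,
      inv_mul_cancel₀ hr', one_smul]
    abel

variable [CommRing k] [Algebra k A]

theorem sub_smul_mul_smul_add_smul_one_sub (hP : IsIdempotentElem P)
    (hH : H * P = (1 - P) * H) {a b c s e r r' : k}
    (ha : r * (1 - s) = a) (hb : r' * (1 + s) = b) (hr : c * r = e * b) (hr' : c * r' = e * a) :
    (1 - e • H) * (a • P + b • (1 - P)) =
      (r • P + r' • (1 - P)) * (1 - (c • H + s • (P - (1 - P)))) := by
  have hH' : H * (1 - P) = P * H := by rw [mul_sub, hH]; noncomm_ring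
  have hPQ := hP.mul_one_sub_self
  have hQP := hP.one_sub_mul_self
  have hQQ := hP.one_sub.eq
  have hPP := hP.eq
  have h1 : (1 : A) = P + (1 - P) := by abel
  generalize 1 - P = Q at *
  rw [h1]
  simp only [mul_add, add_mul, mul_sub, sub_mul, smul_mul_assoc, mul_smul_comm, hH, hH', hPP, hPQ,
    hQP, hQQ, smul_zero]
  linear_combination (norm := module) -(ha • P) - hb • Q + hr • (P * H) + hr' • (Q * H)

end IdempotentGrading

open Matrix in
theorem Matrix.eq_mulVec_iff_of_one_sub_mul_eq {n R : Type*} [Fintype n] [DecidableEq n] [Ring R]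
    {K L M U : Matrix n n R} (hU : IsUnit U) (h : (1 - L) * M = U * (1 - K)) (v : n → R) :
    v = K *ᵥ v ↔ M *ᵥ v = L *ᵥ (M *ᵥ v) :=
  calc v = K *ᵥ v ↔ (1 - K) *ᵥ v = 0 := by rw [sub_mulVec, one_mulVec, sub_eq_zero]
    _ ↔ U *ᵥ ((1 - K) *ᵥ v) = 0 := ((mulVec_injective_of_isUnit hU).eq_iff' (mulVec_zero U)).symm
    _ ↔ (1 - L) *ᵥ (M *ᵥ v) = 0 := by rw [mulVec_mulVec, ← h, ← mulVec_mulVec]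
    _ ↔ M *ᵥ v = L *ᵥ (M *ᵥ v) := by rw [sub_mulVec, one_mulVec, sub_eq_zero]

theorem Real.mul_sqrt_div_eq {p q t : ℝ} (hp : 0 < p) (hq : 0 < q) (ht : 0 ≤ t)
    (h : t ^ 2 = p * q) : t * √(t / p) = q * √(t / q) := by
  have hsq : t ^ 2 * (t / p) = q ^ 2 * (t / q) := by
    field_simp
    linear_combination t * h
  calc t * √(t / p) = √(t ^ 2 * (t / p)) := by rw [Real.sqrt_mul (sq_nonneg t), Real.sqrt_sq ht]
    _ = √(q ^ 2 * (t / q)) := by rw [hsq]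
    _ = q * √(t / q) := by rw [Real.sqrt_mul (sq_nonneg q), Real.sqrt_sq hq.le]

theorem ite_pos_mul_abs (c : ℝ) : (if 0 < c then 1 else -1) * |c| = c := by
  split_ifs with h
  · rw [one_mul, abs_of_pos h]
  · rw [abs_of_nonpos (not_lt.1 h)]; ring

def upperProj : Matrix (Fin 4) (Fin 4) ℂ := Matrix.diagonal fun i => if (i : ℕ) < 2 then 1 else 0

theorem isIdempotentElem_upperProj : IsIdempotentElem upperProj := by
  rw [IsIdempotentElem, upperProj, Matrix.diagonal_mul_diagonal]
  congr 1; ext i; split_ifs <;> simp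

theorem betaM_eq_upperProj_sub : betaM = upperProj - (1 - upperProj) := by
  ext i j; fin_cases i <;> fin_cases j <;> simp [betaM, upperProj]

theorem alphaDot_mul_upperProj (b : Fin 3 → ℝ) :
    alphaDot b * upperProj = (1 - upperProj) * alphaDot b := by
  ext i j; fin_cases i <;> fin_cases j <;>
    simp [alphaDot, alpha1, alpha2, alpha3, upperProj, Matrix.mul_apply, Fin.sum_univ_four]

theorem Mtheta_eq_smul_upperProj_add (θ : ℝ) : Mtheta θ =
    √(|cos θ| / (1 + sin θ)) • upperProj + √(|cos θ| / (1 - sin θ)) • (1 - upperProj) := by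
  ext i j; fin_cases i <;> fin_cases j <;> simp [Mtheta, upperProj]

theorem quantum_dot_to_mit (θ : ℝ) (hcos : Real.cos θ ≠ 0)
    (ν : Fin 3 → ℝ) (v : Fin 4 → ℂ) :
    (v = ((Real.cos θ : ℂ) • (Complex.I • (alphaDot ν * betaM))
        + (Real.sin θ : ℂ) • betaM).mulVec v)
    ↔ (Mtheta θ).mulVec v =
        (if 0 < Real.cos θ then (1 : ℂ) else -1) •
          (Complex.I • ((alphaDot ν * betaM).mulVec ((Mtheta θ).mulVec v))) := by
  set c := cos θ
  set s := sin θ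
  set a := √(|c| / (1 + s))
  set b := √(|c| / (1 - s))
  set e : ℝ := if 0 < c then 1 else -1 with he
  set H := Complex.I • (alphaDot ν * betaM)
  have hc : 0 < |c| := abs_pos.2 hcos
  have hcs : |c| ^ 2 = (1 + s) * (1 - s) := by
    rw [sq_abs]; linear_combination sin_sq_add_cos_sq θ
  have hs₁ : 0 < 1 + s := by nlinarith
  have hs₂ : 0 < 1 - s := by nlinarith
  have hca : |c| * a = (1 - s) * b := Real.mul_sqrt_div_eq hs₁ hs₂ hc.le hcs
  have hcb : |c| * b = (1 + s) * a := Real.mul_sqrt_div_eq hs₂ hs₁ hc.le (by rw [hcs, mul_comm])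
  have hec : e * |c| = c := ite_pos_mul_abs c
  have hHP : H * upperProj = (1 - upperProj) * H := by
    rw [smul_mul_assoc, mul_smul_comm, betaM_eq_upperProj_sub,
      mul_sub_one_sub_mul_of_mul_eq isIdempotentElem_upperProj (alphaDot_mul_upperProj ν)]
  have hconj := sub_smul_mul_smul_add_smul_one_sub (a := a) (b := b) (c := c) (s := s) (e := e)
    isIdempotentElem_upperProj hHP (div_mul_cancel₀ a hs₂.ne') (div_mul_cancel₀ b hs₁.ne')
    (by field_simp; linear_combination e * hca - a * hec)
    (by field_simp; linear_combination e * hcb - b * hec)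
  rw [← betaM_eq_upperProj_sub, ← Mtheta_eq_smul_upperProj_add] at hconj
  have hU := isUnit_smul_add_smul_one_sub isIdempotentElem_upperProj
    (div_ne_zero (Real.sqrt_pos.2 (div_pos hc hs₁)).ne' hs₂.ne')
    (div_ne_zero (Real.sqrt_pos.2 (div_pos hc hs₂)).ne' hs₁.ne')
  have he' : (if 0 < c then (1 : ℂ) else -1) = (e : ℂ) := by rw [he]; split_ifs <;> simp
  rw [he', Complex.coe_smul, Complex.coe_smul, Complex.coe_smul, ← Matrix.smul_mulVec,
    ← Matrix.smul_mulVec]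
  exact Matrix.eq_mulVec_iff_of_one_sub_mul_eq hU hconj v

end
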